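/- arXiv:2110.15223 — 3 statements merged into one kernel-verified Lean document; each statement's English description precedes it below -/
import Mathlib

section
/- Suppose s : (0,∞)² × ℝ → ℝ is smooth, and define θ⁻¹ = ∂_ε s, p = θ ∂_ν s, π = -θ ∂_C s. Let n = ν⁻¹, let u : ℝ⁴ → ℝ⁴ be a smooth field with u^α u_α = -1, and let ε, ν, C be smooth functions on ℝ⁴. Assume the conservation laws ∂_α(n u^α) = 0 and ∂_α(n ε u^α u^β + (p+π)Δ^{αβ}) = 0 hold, where Δ^{αβ} = g^{αβ} + u^α u^β. Then the entropy flux S^α = n u^α s(ε,ν,C) satisfies ∂_α S^α = -θ⁻¹ π (∂_α u^α + n u^α ∂_α C). -/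
noncomputable section

/-- Minkowski metric components diag(-1,1,1,1). -/
def ηd : Fin 4 → ℝ := fun α => if α = 0 then -1 else 1

/-- Minkowski inner product `u^α v_α`. -/
def mink (u v : Fin 4 → ℝ) : ℝ := ∑ α, ηd α * u α * v α

/-- Partial derivative in coordinate direction `α`. -/
def pd (α : Fin 4) (f : (Fin 4 → ℝ) → ℝ) (x : Fin 4 → ℝ) : ℝ :=
  fderiv ℝ f x (Pi.single α 1)

open Finset

/-!
With `D = u^α ∂_α`, particle conservation gives `D ν = ν ∂_α u^α`. Contracting
`∂_α T^{αβ} = 0` with `u_β`, and using `u_β T^{αβ} = -n ε u^α` together with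
`u_β ∂_α u^β = 0` (a consequence of `u^β u_β = -1`), gives `n D ε = -(p + π) ∂_α u^α`.
Since the flux `n u^α` is conserved, `∂_α S^α = n D s`, and the Gibbs relation
`ds = θ⁻¹ (dε + p dν - π dC)` turns this into `-θ⁻¹ π (∂_α u^α + n D C)`.
-/

lemma fderiv_apply_eq_partialDerivs {s : ℝ → ℝ → ℝ → ℝ} {a b c : ℝ}
    (hs : DifferentiableAt ℝ (fun q : ℝ × ℝ × ℝ => s q.1 q.2.1 q.2.2) (a, b, c))
    (v : ℝ × ℝ × ℝ) :
    fderiv ℝ (fun q : ℝ × ℝ × ℝ => s q.1 q.2.1 q.2.2) (a, b, c) v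
      = deriv (fun t => s t b c) a * v.1 + deriv (fun t => s a t c) b * v.2.1
        + deriv (fun t => s a b t) c * v.2.2 := by
  set L := fderiv ℝ (fun q : ℝ × ℝ × ℝ => s q.1 q.2.1 q.2.2) (a, b, c)
  have h1 : HasDerivAt (fun t => s t b c) (L (1, 0, 0)) a :=
    (hs.hasFDerivAt.comp_hasDerivAt a ((hasDerivAt_id a).prodMk (hasDerivAt_const a (b, c))) :)
  have h2 : HasDerivAt (fun t => s a t c) (L (0, 1, 0)) b :=
    (hs.hasFDerivAt.comp_hasDerivAt b
      ((hasDerivAt_const b a).prodMk ((hasDerivAt_id b).prodMk (hasDerivAt_const b c))) :)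
  have h3 : HasDerivAt (fun t => s a b t) (L (0, 0, 1)) c :=
    (hs.hasFDerivAt.comp_hasDerivAt c
      ((hasDerivAt_const c a).prodMk ((hasDerivAt_const c b).prodMk (hasDerivAt_id c))) :)
  have hv : v = v.1 • ((1 : ℝ), (0 : ℝ), (0 : ℝ)) + v.2.1 • ((0 : ℝ), (1 : ℝ), (0 : ℝ))
      + v.2.2 • ((0 : ℝ), (0 : ℝ), (1 : ℝ)) := by
    ext <;> simp
  rw [h1.deriv, h2.deriv, h3.deriv]
  conv_lhs => rw [hv]
  simp only [map_add, map_smul, smul_eq_mul, mul_comm]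

lemma fderiv_comp_three_apply {E : Type*} [NormedAddCommGroup E] [NormedSpace ℝ E]
    {s : ℝ → ℝ → ℝ → ℝ} {f g h : E → ℝ} {x : E}
    (hs : DifferentiableAt ℝ (fun q : ℝ × ℝ × ℝ => s q.1 q.2.1 q.2.2) (f x, g x, h x))
    (hf : DifferentiableAt ℝ f x) (hg : DifferentiableAt ℝ g x) (hh : DifferentiableAt ℝ h x)
    (v : E) :
    fderiv ℝ (fun y => s (f y) (g y) (h y)) x v
      = deriv (fun t => s t (g x) (h x)) (f x) * fderiv ℝ f x v
        + deriv (fun t => s (f x) t (h x)) (g x) * fderiv ℝ g x v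
        + deriv (fun t => s (f x) (g x) t) (h x) * fderiv ℝ h x v := by
  have hcomp : HasFDerivAt (fun y => s (f y) (g y) (h y)) _ x :=
    (hs.hasFDerivAt.comp x (hf.hasFDerivAt.prodMk (hg.hasFDerivAt.prodMk hh.hasFDerivAt)) :)
  rw [hcomp.fderiv]
  exact fderiv_apply_eq_partialDerivs hs _

lemma differentiable_partialDerivs {s : ℝ → ℝ → ℝ → ℝ}
    (hs : ContDiff ℝ 2 (fun q : ℝ × ℝ × ℝ => s q.1 q.2.1 q.2.2)) :
    Differentiable ℝ (fun q : ℝ × ℝ × ℝ => deriv (fun t => s t q.2.1 q.2.2) q.1)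
      ∧ Differentiable ℝ (fun q : ℝ × ℝ × ℝ => deriv (fun t => s q.1 t q.2.2) q.2.1)
      ∧ Differentiable ℝ (fun q : ℝ × ℝ × ℝ => deriv (fun t => s q.1 q.2.1 t) q.2.2) := by
  have hL (v : ℝ × ℝ × ℝ) : Differentiable ℝ
      (fun q => fderiv ℝ (fun q : ℝ × ℝ × ℝ => s q.1 q.2.1 q.2.2) q v) :=
    ((hs.fderiv_right (m := 1) le_rfl).clm_apply contDiff_const).differentiable one_ne_zero
  have hpartial (q v) := fderiv_apply_eq_partialDerivs (hs.differentiable two_ne_zero q) v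
  refine ⟨?_, ?_, ?_⟩ <;> [convert hL (1, 0, 0); convert hL (0, 1, 0); convert hL (0, 0, 1)] <;>
    simp [hpartial]

lemma differentiableAt_pressure_add_bulk {E : Type*} [NormedAddCommGroup E] [NormedSpace ℝ E]
    {s : ℝ → ℝ → ℝ → ℝ} (hs : ContDiff ℝ 2 (fun q : ℝ × ℝ × ℝ => s q.1 q.2.1 q.2.2))
    {ε ν C θ p π : E → ℝ} {x : E} (hε : DifferentiableAt ℝ ε x) (hν : DifferentiableAt ℝ ν x)
    (hC : DifferentiableAt ℝ C x)
    (hθ : ∀ y, θ y * deriv (fun t => s t (ν y) (C y)) (ε y) = 1)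
    (hp : ∀ y, p y = θ y * deriv (fun t => s (ε y) t (C y)) (ν y))
    (hπ : ∀ y, π y = -(θ y) * deriv (fun t => s (ε y) (ν y) t) (C y)) :
    DifferentiableAt ℝ (fun y => p y + π y) x := by
  have hΦ := hε.prodMk (hν.prodMk hC)
  obtain ⟨hs₁, hs₂, hs₃⟩ := differentiable_partialDerivs hs
  have hsε := (hs₁ _).comp x hΦ
  have hsν := (hs₂ _).comp x hΦ
  have hsC := (hs₃ _).comp x hΦ
  simp only [hp, hπ, fun y => eq_inv_of_mul_eq_one_left (hθ y)]
  fun_prop (disch := exact right_ne_zero_of_mul_eq_one (hθ x))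

lemma sum_mul_pd_eq_fderiv (f : (Fin 4 → ℝ) → ℝ) (x v : Fin 4 → ℝ) :
    ∑ α, v α * pd α f x = fderiv ℝ f x v := by
  conv_rhs => rw [← Finset.univ_sum_single v, map_sum]
  refine sum_congr rfl fun α _ => ?_
  rw [pd, ← smul_eq_mul, ← map_smul, ← Pi.single_smul', smul_eq_mul, mul_one]

lemma pd_mul {f g : (Fin 4 → ℝ) → ℝ} {x : Fin 4 → ℝ} (hf : DifferentiableAt ℝ f x)
    (hg : DifferentiableAt ℝ g x) (α : Fin 4) :
    pd α (fun y => f y * g y) x = f x * pd α g x + pd α f x * g x := by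
  simp [pd, fderiv_fun_mul hf hg, mul_comm]

lemma pd_sum {ι : Type*} {s : Finset ι} {f : ι → (Fin 4 → ℝ) → ℝ} {x : Fin 4 → ℝ}
    (hf : ∀ i ∈ s, DifferentiableAt ℝ (f i) x) (α : Fin 4) :
    pd α (fun y => ∑ i ∈ s, f i y) x = ∑ i ∈ s, pd α (f i) x := by
  simp [pd, fderiv_fun_sum hf]

def divergence (V : (Fin 4 → ℝ) → Fin 4 → ℝ) (x : Fin 4 → ℝ) : ℝ :=
  ∑ α, pd α (fun y => V y α) x

lemma divergence_mul {f : (Fin 4 → ℝ) → ℝ} {V : (Fin 4 → ℝ) → Fin 4 → ℝ} {x : Fin 4 → ℝ}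
    (hf : DifferentiableAt ℝ f x) (hV : ∀ α, DifferentiableAt ℝ (fun y => V y α) x) :
    divergence (fun y α => f y * V y α) x = f x * divergence V x + fderiv ℝ f x (V x) := by
  simp only [divergence, pd_mul hf (hV _), sum_add_distrib, ← mul_sum,
    ← sum_mul_pd_eq_fderiv, mul_comm]

lemma mink_comm (v w : Fin 4 → ℝ) : mink v w = mink w v := by
  simp only [mink, mul_right_comm]

lemma mink_sum_right {ι : Type*} (s : Finset ι) (v : Fin 4 → ℝ) (w : ι → Fin 4 → ℝ) :
    ∑ i ∈ s, mink v (w i) = mink v (fun β => ∑ i ∈ s, w i β) := by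
  simp only [mink, mul_sum]
  exact sum_comm

lemma pd_mink {v w : (Fin 4 → ℝ) → Fin 4 → ℝ} {x : Fin 4 → ℝ}
    (hv : ∀ β, DifferentiableAt ℝ (fun y => v y β) x)
    (hw : ∀ β, DifferentiableAt ℝ (fun y => w y β) x) (α : Fin 4) :
    pd α (fun y => mink (v y) (w y)) x
      = mink (v x) (fun β => pd α (fun y => w y β) x)
        + mink (fun β => pd α (fun y => v y β) x) (w x) := by
  unfold mink
  rw [pd_sum fun β _ => ((differentiableAt_const _).fun_mul (hv β)).fun_mul (hw β),
    ← sum_add_distrib]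
  refine sum_congr rfl fun β _ => ?_
  rw [pd_mul ((differentiableAt_const _).fun_mul (hv β)) (hw β),
    pd_mul (differentiableAt_const _) (hv β)]
  simp only [pd, fderiv_fun_const, Pi.zero_apply, zero_apply, zero_mul, add_zero]

lemma mink_pd_eq_zero_of_mink_self_eq {u : (Fin 4 → ℝ) → Fin 4 → ℝ} {x : Fin 4 → ℝ} {c : ℝ}
    (hu : ∀ β, DifferentiableAt ℝ (fun y => u y β) x) (hnorm : ∀ y, mink (u y) (u y) = c)
    (α : Fin 4) : mink (u x) (fun β => pd α (fun y => u y β) x) = 0 := by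
  have h := pd_mink hu hu α
  rw [mink_comm (fun β => pd α (fun y => u y β) x) (u x),
    show pd α (fun y => mink (u y) (u y)) x = 0 by simp [pd, hnorm]] at h
  linarith

lemma ηd_mul_self (α : Fin 4) : ηd α * ηd α = 1 := by
  unfold ηd; split <;> norm_num

/-- `ρ u^α u^β + P Δ^{αβ}` with `Δ^{αβ} = g^{αβ} + u^α u^β`. -/
def perfectFluid (ρ P : ℝ) (u : Fin 4 → ℝ) (α β : Fin 4) : ℝ :=
  ρ * u α * u β + P * ((if α = β then ηd α else 0) + u α * u β)

lemma mink_perfectFluid (ρ P : ℝ) (u w : Fin 4 → ℝ) (α : Fin 4) :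
    mink w (perfectFluid ρ P u α) = (ρ + P) * u α * mink u w + P * w α := by
  have hδ : ∑ β, ηd β * w β * (if α = β then ηd α else 0) = w α := by
    simp only [mul_ite, mul_zero, sum_ite_eq, mem_univ, if_true]
    linear_combination w α * ηd_mul_self α
  calc mink w (perfectFluid ρ P u α)
      = ∑ β, ((ρ + P) * u α * (ηd β * u β * w β)
          + P * (ηd β * w β * (if α = β then ηd α else 0))) :=
        sum_congr rfl fun β _ => by unfold perfectFluid; ring
    _ = (ρ + P) * u α * mink u w + P * w α := by
        rw [sum_add_distrib, ← mul_sum, ← mul_sum, hδ, mink]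

lemma fderiv_apply_mul_eq_neg_of_divergence_perfectFluid_eq_zero
    {n ε P : (Fin 4 → ℝ) → ℝ} {u : (Fin 4 → ℝ) → Fin 4 → ℝ} {x : Fin 4 → ℝ}
    (hn : DifferentiableAt ℝ n x) (hε : DifferentiableAt ℝ ε x) (hP : DifferentiableAt ℝ P x)
    (hu : ∀ β, DifferentiableAt ℝ (fun y => u y β) x) (hnorm : ∀ y, mink (u y) (u y) = -1)
    (hpart : divergence (fun y α => n y * u y α) x = 0)
    (hT : ∀ β, divergence (fun y α => perfectFluid (n y * ε y) (P y) (u y) α β) x = 0) :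
    fderiv ℝ ε x (fun α => n x * u x α) = -(P x * divergence u x) := by
  have hnu : ∀ α, DifferentiableAt ℝ (fun y => n y * u y α) x := fun α => hn.fun_mul (hu α)
  have hT' (α β : Fin 4) :
      DifferentiableAt ℝ (fun y => perfectFluid (n y * ε y) (P y) (u y) α β) x := by
    unfold perfectFluid; fun_prop
  have hcontract : (fun y α => mink (u y) (perfectFluid (n y * ε y) (P y) (u y) α))
      = fun y α => -ε y * (n y * u y α) := by
    ext y α
    rw [mink_perfectFluid, hnorm]
    ring
  -- `∂_α (u_β T^{αβ})`, computed from the contraction and by the product rule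
  have hflux : divergence (fun y α => mink (u y) (perfectFluid (n y * ε y) (P y) (u y) α)) x
      = -fderiv ℝ ε x (fun α => n x * u x α) := by
    rw [hcontract, divergence_mul (f := fun y => -ε y) hε.fun_neg hnu, hpart, fderiv_fun_neg]
    simp
  have hproduct : divergence (fun y α => mink (u y) (perfectFluid (n y * ε y) (P y) (u y) α)) x
      = P x * divergence u x := by
    simp only [divergence]
    rw [sum_congr rfl fun α _ => pd_mink hu (hT' α) α, sum_add_distrib, mink_sum_right]
    simp only [mink_perfectFluid, mink_pd_eq_zero_of_mink_self_eq hu hnorm, mul_zero, zero_add]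
    rw [show (fun β => ∑ α, pd α (fun y => perfectFluid (n y * ε y) (P y) (u y) α β) x) = 0
      from funext hT]
    simp only [mink, Pi.zero_apply, mul_zero, sum_const_zero, zero_add, mul_sum]
  linarith

lemma fderiv_apply_inv_mul_eq_divergence {ν : (Fin 4 → ℝ) → ℝ} {u : (Fin 4 → ℝ) → Fin 4 → ℝ}
    {x : Fin 4 → ℝ} (hν : DifferentiableAt ℝ ν x) (hν0 : ν x ≠ 0)
    (hu : ∀ α, DifferentiableAt ℝ (fun y => u y α) x)
    (hpart : divergence (fun y α => (ν y)⁻¹ * u y α) x = 0) :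
    fderiv ℝ ν x (fun α => (ν x)⁻¹ * u x α) = divergence u x := by
  have hinv : HasFDerivAt (fun y => (ν y)⁻¹) ((-(ν x ^ 2)⁻¹) • fderiv ℝ ν x) x :=
    (hasDerivAt_inv hν0).comp_hasFDerivAt x hν.hasFDerivAt
  rw [divergence_mul hinv.differentiableAt hu, hinv.fderiv] at hpart
  change fderiv ℝ ν x ((ν x)⁻¹ • u x) = _
  rw [map_smul, smul_eq_mul]
  simp only [smul_apply, smul_eq_mul] at hpart
  field_simp at hpart ⊢
  linarith

lemma divergence_mul_comp_three {s : ℝ → ℝ → ℝ → ℝ} {V : (Fin 4 → ℝ) → Fin 4 → ℝ}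
    {f g h : (Fin 4 → ℝ) → ℝ} {x : Fin 4 → ℝ}
    (hs : DifferentiableAt ℝ (fun q : ℝ × ℝ × ℝ => s q.1 q.2.1 q.2.2) (f x, g x, h x))
    (hf : DifferentiableAt ℝ f x) (hg : DifferentiableAt ℝ g x) (hh : DifferentiableAt ℝ h x)
    (hV : ∀ α, DifferentiableAt ℝ (fun y => V y α) x) (hdiv : divergence V x = 0) :
    divergence (fun y α => V y α * s (f y) (g y) (h y)) x
      = deriv (fun t => s t (g x) (h x)) (f x) * fderiv ℝ f x (V x)
        + deriv (fun t => s (f x) t (h x)) (g x) * fderiv ℝ g x (V x)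
        + deriv (fun t => s (f x) (g x) t) (h x) * fderiv ℝ h x (V x) := by
  simp only [mul_comm (V _ _)]
  have hcomp : DifferentiableAt ℝ (fun y => s (f y) (g y) (h y)) x :=
    (hs.comp x (hf.prodMk (hg.prodMk hh)) :)
  rw [divergence_mul hcomp hV, hdiv, mul_zero, zero_add,
    fderiv_comp_three_apply hs hf hg hh]

/-- Entropy production computation: given a smooth equation of state `s(ε,ν,C)` with
`θ⁻¹ = ∂_ε s`, `p = θ ∂_ν s`, `π = -θ ∂_C s`, `n = ν⁻¹`, a normalized velocity field
`u` and the conservation laws `∂_α(n u^α) = 0`, `∂_α(n ε u^α u^β + (p+π)Δ^{αβ}) = 0`,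
the entropy flux `S^α = n u^α s` satisfies
`∂_α S^α = -θ⁻¹ π (∂_α u^α + n u^α ∂_α C)`. -/
theorem stmt11
    (s : ℝ → ℝ → ℝ → ℝ)
    (hs : ContDiff ℝ (⊤ : ℕ∞) (fun q : ℝ × ℝ × ℝ => s q.1 q.2.1 q.2.2))
    (u : (Fin 4 → ℝ) → Fin 4 → ℝ) (ε ν C : (Fin 4 → ℝ) → ℝ)
    (hu : ∀ β, ContDiff ℝ (⊤ : ℕ∞) (fun x => u x β))
    (hε : ContDiff ℝ (⊤ : ℕ∞) ε) (hν : ContDiff ℝ (⊤ : ℕ∞) ν)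
    (hC : ContDiff ℝ (⊤ : ℕ∞) C)
    (hnorm : ∀ x, mink (u x) (u x) = -1)
    (hνpos : ∀ x, 0 < ν x)
    (θ p π : (Fin 4 → ℝ) → ℝ)
    -- temperature: θ⁻¹ = ∂_ε s (in particular θ ≠ 0)
    (hθ : ∀ x, θ x * deriv (fun t => s t (ν x) (C x)) (ε x) = 1)
    -- pressure: p = θ ∂_ν s
    (hp : ∀ x, p x = θ x * deriv (fun t => s (ε x) t (C x)) (ν x))
    -- bulk viscosity: π = -θ ∂_C s
    (hπ : ∀ x, π x = -(θ x) * deriv (fun t => s (ε x) (ν x) t) (C x))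
    -- particle number conservation ∂_α (n u^α) = 0
    (hpart : ∀ x, ∑ α, pd α (fun y => (ν y)⁻¹ * u y α) x = 0)
    -- energy-momentum conservation ∂_α T^{αβ} = 0
    (hT : ∀ x, ∀ β : Fin 4, ∑ α, pd α (fun y =>
        (ν y)⁻¹ * ε y * u y α * u y β
        + (p y + π y) * ((if (α : Fin 4) = β then ηd α else 0) + u y α * u y β)) x = 0) :
    ∀ x, ∑ α, pd α (fun y => (ν y)⁻¹ * u y α * s (ε y) (ν y) (C y)) x
      = -(θ x)⁻¹ * π x *
        ((∑ α, pd α (fun y => u y α) x) + (ν x)⁻¹ * ∑ α, u x α * pd α C x) := by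
  intro x
  have hdiff {f : (Fin 4 → ℝ) → ℝ} (hf : ContDiff ℝ (⊤ : ℕ∞) f) : DifferentiableAt ℝ f x :=
    hf.differentiable (by simp) x
  have hu' (β : Fin 4) := hdiff (hu β)
  have hn : DifferentiableAt ℝ (fun y => (ν y)⁻¹) x := (hdiff hν).inv (hνpos x).ne'
  have hP := differentiableAt_pressure_add_bulk (hs.of_le (WithTop.coe_le_coe.mpr le_top))
    (hdiff hε) (hdiff hν) (hdiff hC) hθ hp hπ
  have hDν := fderiv_apply_inv_mul_eq_divergence (hdiff hν) (hνpos x).ne' hu' (hpart x)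
  have hDε := fderiv_apply_mul_eq_neg_of_divergence_perfectFluid_eq_zero hn (hdiff hε) hP hu'
    hnorm (hpart x) (hT x)
  have hDC : fderiv ℝ C x (fun α => (ν x)⁻¹ * u x α) = (ν x)⁻¹ * ∑ α, u x α * pd α C x := by
    rw [sum_mul_pd_eq_fderiv]
    exact map_smul (fderiv ℝ C x) (ν x)⁻¹ (u x)
  have hθ0 : θ x ≠ 0 := left_ne_zero_of_mul_eq_one (hθ x)
  have hsε : deriv (fun t => s t (ν x) (C x)) (ε x) = (θ x)⁻¹ :=
    eq_inv_of_mul_eq_one_right (hθ x)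
  have hsν : deriv (fun t => s (ε x) t (C x)) (ν x) = (θ x)⁻¹ * p x := by
    rw [hp x]; field_simp
  have hsC : deriv (fun t => s (ε x) (ν x) t) (C x) = -((θ x)⁻¹ * π x) := by
    rw [hπ x]; field_simp
  refine (divergence_mul_comp_three (hs.differentiable (by simp) _) (hdiff hε) (hdiff hν)
    (hdiff hC) (fun α => hn.fun_mul (hu' α)) (hpart x)).trans ?_
  rw [hsε, hsν, hsC, hDε, hDν, hDC, divergence]
  ring
end
end

section
/- In the setting of the entropy production identity ∂_α S^α = -θ⁻¹ π (∂_α u^α + n u^α ∂_α C): if additionally the field C satisfies the relaxation equation n u^α ∂_α C + ∂_α u^α = -M π with M > 0 and θ > 0, then ∂_α S^α = θ⁻¹ M π² ≥ 0, with equality exactly where π = 0. -/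
noncomputable section

/-- If the entropy production identity `∂_α S^α = -θ⁻¹ π (∂_α u^α + n u^α ∂_α C)` holds and
`C` satisfies the relaxation equation `n u^α ∂_α C + ∂_α u^α = -M π` with `M > 0`, `θ > 0`,
then `∂_α S^α = θ⁻¹ M π² ≥ 0`, with equality exactly where `π = 0`.
Here `divS x = ∂_α S^α (x)`, `divu x = ∂_α u^α (x)` and `udC x = u^α ∂_α C (x)`. -/
theorem stmt12 (divS divu udC n M θ π : (Fin 4 → ℝ) → ℝ)
    (hS : ∀ x, divS x = -(θ x)⁻¹ * π x * (divu x + n x * udC x))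
    (hrelax : ∀ x, n x * udC x + divu x = -(M x) * π x)
    (hM : ∀ x, 0 < M x) (hθ : ∀ x, 0 < θ x) :
    ∀ x, divS x = (θ x)⁻¹ * M x * (π x) ^ 2 ∧
      0 ≤ divS x ∧ (divS x = 0 ↔ π x = 0) := by
  intro x
  have h1 : divu x + n x * udC x = -(M x) * π x := by
    have := hrelax x; linarith
  have heq : divS x = (θ x)⁻¹ * M x * (π x) ^ 2 := by
    rw [hS x, h1]; ring
  have hθi : 0 < (θ x)⁻¹ := inv_pos.mpr (hθ x)
  refine ⟨heq, ?_, ?_⟩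
  · rw [heq]
    have hMx := hM x
    positivity
  · rw [heq]
    constructor
    · intro h
      have hpos := mul_pos hθi (hM x)
      have hsq : π x ^ 2 = 0 := by
        by_contra hne
        have : 0 < π x ^ 2 := lt_of_le_of_ne (sq_nonneg _) (Ne.symm hne)
        nlinarith
      exact pow_eq_zero_iff (by norm_num) |>.mp hsq
    · intro h; rw [h]; ring
end
end

section
/- Let Ω ⊆ ℝⁿ be open, F⁰,…,F^d : Ω → ℝⁿ and S⁰,…,S^d : Ω → ℝ smooth, and suppose ψ : Ω → ℝⁿ is a smooth diffeomorphism onto its image satisfying ψ(U)ᵀ D_U F^α(U) = D_U S^α(U) for all U ∈ Ω and each α. Define X^α(ψ) = ψᵀ F^α(U(ψ)) - S^α(U(ψ)) in the ψ-coordinates. Then ∂X^α/∂ψ_i = F^α_i for each i and α; in particular D²_ψ X^α = D_ψ F^α is symmetric. -/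
/-!
In the coordinates `q = ψ(U)`, differentiating `X(q) = q ⬝ F(U(q)) - S(U(q))` gives
`dX = F ⬝ dq + q ⬝ D_U F dU - D_U S dU`, and the compatibility relation cancels the last two
terms, so `∇_q X = F ∘ U`. The Jacobian `D_q (F ∘ U)` is then the Hessian of the smooth
potential `X`, which is symmetric by Schwarz's theorem.
-/

open ContinuousLinearMap

theorem sum_mul_apply_eq_of_single {ι κ : Type*} [Fintype ι] [Fintype κ] [DecidableEq κ]
    (p : ι → ℝ) (L : (κ → ℝ) →L[ℝ] (ι → ℝ)) (ℓ : (κ → ℝ) →L[ℝ] ℝ)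
    (h : ∀ j, ∑ i, p i * L (Pi.single j 1) i = ℓ (Pi.single j 1)) (w : κ → ℝ) :
    ∑ i, p i * L w i = ℓ w := by
  suffices (∑ i, p i • (proj i).comp L : (κ → ℝ) →L[ℝ] ℝ).toLinearMap = ℓ.toLinearMap by
    simpa using congrArg (· w) this
  refine LinearMap.pi_ext fun j x => ?_
  have hx : (Pi.single j x : κ → ℝ) = x • Pi.single j 1 := by
    rw [← Pi.single_smul', smul_eq_mul, mul_one]
  simp [hx, ← h j, Finset.mul_sum]

theorem fderiv_potential_apply_single {ι : Type*} [Fintype ι] [DecidableEq ι]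
    {f : (ι → ℝ) → (ι → ℝ)} {s : (ι → ℝ) → ℝ} {q : ι → ℝ}
    (hf : DifferentiableAt ℝ f q) (hs : DifferentiableAt ℝ s q)
    (hcompat : ∀ w, ∑ k, q k * fderiv ℝ f q w k = fderiv ℝ s q w) (i : ι) :
    fderiv ℝ (fun r => ∑ k, r k * f r k - s r) q (Pi.single i 1) = f q i := by
  have hterm : ∀ k, HasFDerivAt (fun r => r k * f r k)
      (q k • (proj k).comp (fderiv ℝ f q) + f q k • proj k) q := fun k =>
    (hasFDerivAt_apply k q).mul (hasFDerivAt_pi'.1 hf.hasFDerivAt k)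
  rw [((HasFDerivAt.fun_sum fun k _ => hterm k).fun_sub hs.hasFDerivAt).fderiv]
  simp [Finset.sum_add_distrib, hcompat, Pi.single_apply]

theorem IsSymmSndFDerivAt.fderiv_fderiv_apply_comm {𝕜 E F : Type*} [NontriviallyNormedField 𝕜]
    [NormedAddCommGroup E] [NormedSpace 𝕜 E] [NormedAddCommGroup F] [NormedSpace 𝕜 F]
    {f : E → F} {x : E} (hf : IsSymmSndFDerivAt 𝕜 f x)
    (hdf : DifferentiableAt 𝕜 (fderiv 𝕜 f) x) (v w : E) :
    fderiv 𝕜 (fun y => fderiv 𝕜 f y v) x w = fderiv 𝕜 (fun y => fderiv 𝕜 f y w) x v := by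
  simpa [fderiv_clm_apply hdf (differentiableAt_const _)] using hf w v

theorem fderiv_potential_comp_apply_single {ι : Type*} [Fintype ι] [DecidableEq ι]
    {F U : (ι → ℝ) → (ι → ℝ)} {S : (ι → ℝ) → ℝ} {q : ι → ℝ}
    (hF : DifferentiableAt ℝ F (U q)) (hS : DifferentiableAt ℝ S (U q))
    (hU : DifferentiableAt ℝ U q)
    (hcompat : ∀ j, ∑ i, q i * fderiv ℝ (fun y => F y i) (U q) (Pi.single j 1)
      = fderiv ℝ S (U q) (Pi.single j 1)) (i : ι) :
    fderiv ℝ (fun r => ∑ k, r k * F (U r) k - S (U r)) q (Pi.single i 1) = F (U q) i := by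
  refine fderiv_potential_apply_single (f := fun r => F (U r)) (s := fun r => S (U r))
    (hF.comp q hU) (hS.comp q hU) (fun w => ?_) i
  rw [fderiv_fun_comp q hF hU, fderiv_fun_comp q hS hU]
  refine sum_mul_apply_eq_of_single q _ _ (fun j => ?_) (fderiv ℝ U q w)
  simpa [fderiv_apply hF] using hcompat j

theorem ContDiffAt.fderiv_comm_of_eventuallyEq_fderiv {𝕜 E F ι : Type*}
    [NontriviallyNormedField 𝕜] [NormedAddCommGroup E] [NormedSpace 𝕜 E]
    [NormedAddCommGroup F] [NormedSpace 𝕜 F] {f : E → F} {x : E} {n : WithTop ℕ∞}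
    (hf : ContDiffAt 𝕜 n f x) (hn : minSmoothness 𝕜 2 ≤ n) {e : ι → E} {g : ι → E → F}
    (hg : ∀ m, g m =ᶠ[nhds x] fun y => fderiv 𝕜 f y (e m)) (i j : ι) :
    fderiv 𝕜 (g j) x (e i) = fderiv 𝕜 (g i) x (e j) := by
  have h2 : ContDiffAt 𝕜 2 f x := hf.of_le (le_minSmoothness.trans hn)
  rw [(hg i).fderiv_eq, (hg j).fderiv_eq]
  exact (hf.isSymmSndFDerivAt hn).fderiv_fderiv_apply_comm
    ((h2.fderiv_right (m := 1) le_rfl).differentiableAt one_ne_zero) _ _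

theorem stmt13_general (n d : ℕ) (Ω : Set (Fin n → ℝ)) (hΩ : IsOpen Ω)
    (F : Fin (d + 1) → (Fin n → ℝ) → (Fin n → ℝ))
    (S : Fin (d + 1) → (Fin n → ℝ) → ℝ)
    (ψ U : (Fin n → ℝ) → (Fin n → ℝ))
    (hF : ∀ α, ContDiffOn ℝ (⊤ : ℕ∞) (F α) Ω)
    (hS : ∀ α, ContDiffOn ℝ (⊤ : ℕ∞) (S α) Ω)
    (hopen : IsOpen (ψ '' Ω))
    (hU : ContDiffOn ℝ (⊤ : ℕ∞) U (ψ '' Ω))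
    (hinv : ∀ x ∈ Ω, U (ψ x) = x)
    (hinv' : ∀ q ∈ ψ '' Ω, ψ (U q) = q)
    -- the compatibility relation ψᵀ D_U F^α = D_U S^α on Ω
    (hmain : ∀ α, ∀ x ∈ Ω, ∀ j : Fin n,
      ∑ i, ψ x i * fderiv ℝ (fun y => F α y i) x (Pi.single j 1)
        = fderiv ℝ (S α) x (Pi.single j 1)) :
    ∀ α, ∀ q ∈ ψ '' Ω,
      (∀ i : Fin n,
        fderiv ℝ (fun r => (∑ k, r k * F α (U r) k) - S α (U r)) q (Pi.single i 1)
          = F α (U q) i) ∧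
      (∀ i j : Fin n,
        fderiv ℝ (fun r => F α (U r) j) q (Pi.single i 1)
          = fderiv ℝ (fun r => F α (U r) i) q (Pi.single j 1)) := by
  intro α
  have hmaps : Set.MapsTo U (ψ '' Ω) Ω := by
    rintro _ ⟨x, hx, rfl⟩
    rwa [hinv x hx]
  have hFU : ContDiffOn ℝ (⊤ : ℕ∞) (fun r => F α (U r)) (ψ '' Ω) := (hF α).comp hU hmaps
  have hgrad : ∀ q ∈ ψ '' Ω, ∀ i : Fin n,
      fderiv ℝ (fun r => (∑ k, r k * F α (U r) k) - S α (U r)) q (Pi.single i 1)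
        = F α (U q) i := fun q hq =>
    have hx : U q ∈ Ω := hmaps hq
    fderiv_potential_comp_apply_single
      (((hF α).contDiffAt (hΩ.mem_nhds hx)).differentiableAt (by simp))
      (((hS α).contDiffAt (hΩ.mem_nhds hx)).differentiableAt (by simp))
      ((hU.contDiffAt (hopen.mem_nhds hq)).differentiableAt (by simp))
      (by simpa [hinv' q hq] using hmain α (U q) hx)
  intro q hq
  refine ⟨hgrad q hq, fun i j => ?_⟩
  have hG : ContDiffOn ℝ (⊤ : ℕ∞) (fun r => (∑ k, r k * F α (U r) k) - S α (U r)) (ψ '' Ω) :=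
    .sub (.sum fun k _ => (contDiff_apply ℝ ℝ k).contDiffOn.mul
      ((contDiff_apply ℝ ℝ k).comp_contDiffOn hFU)) ((hS α).comp hU hmaps)
  exact (hG.contDiffAt (hopen.mem_nhds hq)).fderiv_comm_of_eventuallyEq_fderiv
    (by simpa using WithTop.coe_le_coe.2 (le_top : (2 : ℕ∞) ≤ ⊤))
    (fun m => Filter.eventually_of_mem (hopen.mem_nhds hq) fun r hr => (hgrad r hr m).symm) i j

/-- The Godunov potential construction: if the main field `ψ` (a smooth diffeomorphism with
smooth inverse `U`) satisfies `ψᵀ D_U F^α = D_U S^α` on `Ω`, then the potential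
`X^α(ψ) = ψᵀ F^α(U(ψ)) - S^α(U(ψ))` satisfies `∂X^α/∂ψ_i = F^α_i`; in particular
`D²_ψ X^α = D_ψ F^α` is symmetric. -/
theorem stmt13 (n d : ℕ) (Ω : Set (Fin n → ℝ)) (hΩ : IsOpen Ω)
    (F : Fin (d + 1) → (Fin n → ℝ) → (Fin n → ℝ))
    (S : Fin (d + 1) → (Fin n → ℝ) → ℝ)
    (ψ U : (Fin n → ℝ) → (Fin n → ℝ))
    (hF : ∀ α, ContDiffOn ℝ (⊤ : ℕ∞) (F α) Ω)
    (hS : ∀ α, ContDiffOn ℝ (⊤ : ℕ∞) (S α) Ω)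
    (hψ : ContDiffOn ℝ (⊤ : ℕ∞) ψ Ω)
    (hopen : IsOpen (ψ '' Ω))
    (hU : ContDiffOn ℝ (⊤ : ℕ∞) U (ψ '' Ω))
    (hinv : ∀ x ∈ Ω, U (ψ x) = x)
    (hinv' : ∀ q ∈ ψ '' Ω, ψ (U q) = q)
    -- the compatibility relation ψᵀ D_U F^α = D_U S^α on Ω
    (hmain : ∀ α, ∀ x ∈ Ω, ∀ j : Fin n,
      ∑ i, ψ x i * fderiv ℝ (fun y => F α y i) x (Pi.single j 1)
        = fderiv ℝ (S α) x (Pi.single j 1)) :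
    ∀ α, ∀ q ∈ ψ '' Ω,
      (∀ i : Fin n,
        fderiv ℝ (fun r => (∑ k, r k * F α (U r) k) - S α (U r)) q (Pi.single i 1)
          = F α (U q) i) ∧
      (∀ i j : Fin n,
        fderiv ℝ (fun r => F α (U r) j) q (Pi.single i 1)
          = fderiv ℝ (fun r => F α (U r) i) q (Pi.single j 1)) :=
  stmt13_general n d Ω hΩ F S ψ U hF hS hopen hU hinv hinv' hmain
end
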